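/- Let f be continuous on the closed unit disk, let p be a polynomial of degree n with sup_{|z|≤1} |f(z) − p(z)| ≤ d/3 for some d > 0, and suppose there exist points z₁, z₂ on the unit circle with |f(z₂) − f(z₁)| ≥ d and |arg(z₂) − arg(z₁)| ≤ δ (measuring the shorter arc). If also sup_{|z|≤1} |f(z)| ≤ R, then n ≥ (d/3) / (δ·(R + d/3)). -/

import Mathlib

/-!
On the closed unit disk `‖p‖ ≤ R + d/3`, so Bernstein's inequality bounds `‖p'‖` by
`n (R + d/3)` on the unit circle, and integrating `p'` along the arc from `z₁` to `z₂` gives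
`‖p z₂ - p z₁‖ ≤ n (R + d/3) δ`. On the other hand `‖p z₂ - p z₁‖ ≥ d - 2d/3 = d/3`.
Bernstein's inequality is proved outside the disk from the Gauss–Lucas theorem and extended to
the circle by continuity.
-/

open Polynomial Metric Complex

namespace Polynomial

lemma eval_reflect_inv_mul_pow {K : Type*} [Field K] {p : K[X]} {n : ℕ} (hp : p.natDegree ≤ n)
    {x : K} (hx : x ≠ 0) : (p.reflect n).eval x⁻¹ * x ^ n = p.eval x := by
  let := invertibleOfNonzero hx
  simpa [invOf_eq_inv] using eval₂_reflect_mul_pow (RingHom.id K) x n p hp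

variable {p : ℂ[X]} {n : ℕ} {M : ℝ}

/-- `reflect n p` is `z ↦ zⁿ p(1/z)`, so on the unit circle it has the same modulus as `p`. -/
lemma norm_eval_reflect_le (hdeg : p.natDegree ≤ n)
    (hp : ∀ z : ℂ, ‖z‖ ≤ 1 → ‖p.eval z‖ ≤ M) {z : ℂ} (hz : ‖z‖ ≤ 1) :
    ‖(p.reflect n).eval z‖ ≤ M := by
  refine norm_le_of_forall_mem_frontier_norm_le isBounded_ball
    (p.reflect n).differentiable.diffContOnCl (fun w hw => ?_)
    (by rwa [closure_ball 0 one_ne_zero, mem_closedBall_zero_iff])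
  rw [frontier_ball 0 one_ne_zero, mem_sphere_zero_iff_norm] at hw
  have hw0 : w⁻¹ ≠ 0 := inv_ne_zero (norm_ne_zero_iff.mp (by simp [hw]))
  have := eval_reflect_inv_mul_pow hdeg hw0
  rw [inv_inv] at this
  calc ‖(p.reflect n).eval w‖ = ‖p.eval w⁻¹‖ := by
        rw [← this, norm_mul, norm_pow, norm_inv, hw]; simp
    _ ≤ M := hp _ (by simp [hw])

lemma norm_coeff_le_of_norm_eval_le (hdeg : p.natDegree ≤ n)
    (hp : ∀ z : ℂ, ‖z‖ ≤ 1 → ‖p.eval z‖ ≤ M) : ‖p.coeff n‖ ≤ M := by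
  have := norm_eval_reflect_le hdeg hp (z := 0) (by simp)
  rwa [← coeff_zero_eq_eval_zero, coeff_reflect, revAt_le n.zero_le, Nat.sub_zero] at this

lemma norm_eval_le_mul_pow_of_one_le_norm (hdeg : p.natDegree ≤ n)
    (hp : ∀ z : ℂ, ‖z‖ ≤ 1 → ‖p.eval z‖ ≤ M) {w : ℂ} (hw : 1 ≤ ‖w‖) :
    ‖p.eval w‖ ≤ M * ‖w‖ ^ n := by
  have hw0 : w ≠ 0 := norm_pos_iff.mp (one_pos.trans_le hw)
  rw [← eval_reflect_inv_mul_pow hdeg hw0, norm_mul, norm_pow]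
  gcongr
  exact norm_eval_reflect_le hdeg hp (by rw [norm_inv]; exact inv_le_one_of_one_le₀ hw)

lemma norm_le_one_of_isRoot_C_mul_X_pow_sub (hdeg : p.natDegree ≤ n)
    (hp : ∀ z : ℂ, ‖z‖ ≤ 1 → ‖p.eval z‖ ≤ M) {c : ℂ} (hc : M < ‖c‖) {r : ℂ}
    (hr : (C c * X ^ n - p).IsRoot r) : ‖r‖ ≤ 1 := by
  by_contra! hr1
  have hpr : p.eval r = c * r ^ n := by
    rw [IsRoot.def, eval_sub, eval_C_mul, eval_pow, eval_X, sub_eq_zero] at hr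
    exact hr.symm
  have := norm_eval_le_mul_pow_of_one_le_norm hdeg hp hr1.le
  rw [hpr, norm_mul, norm_pow] at this
  have : 0 < ‖r‖ ^ n := by positivity
  nlinarith

/-- Bernstein's inequality outside the unit disk. If it failed at `w`, then for a suitable `c`
with `‖c‖ > M` the derivative of `c Xⁿ - p` would vanish at `w`, while all roots of `c Xⁿ - p`
lie in the unit disk: this contradicts the Gauss–Lucas theorem. -/
lemma norm_eval_derivative_le_of_one_lt_norm (hdeg : p.natDegree ≤ n)
    (hp : ∀ z : ℂ, ‖z‖ ≤ 1 → ‖p.eval z‖ ≤ M) {w : ℂ} (hw : 1 < ‖w‖) :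
    ‖p.derivative.eval w‖ ≤ n * M * ‖w‖ ^ (n - 1) := by
  rcases Nat.eq_zero_or_pos n with rfl | hn
  · simp [derivative_of_natDegree_zero (Nat.le_zero.mp hdeg)]
  by_contra! hlt
  have hw0 : w ≠ 0 := norm_pos_iff.mp (one_pos.trans hw)
  set c := p.derivative.eval w / (n * w ^ (n - 1))
  have hD : (n : ℂ) * w ^ (n - 1) ≠ 0 :=
    mul_ne_zero (by exact_mod_cast hn.ne') (pow_ne_zero _ hw0)
  have hc : M < ‖c‖ := by
    rw [norm_div, lt_div_iff₀ (norm_pos_iff.mpr hD), norm_mul, norm_pow, Complex.norm_natCast]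
    linarith
  set g := C c * X ^ n - p
  have hgn : g.coeff n ≠ 0 := by
    have := norm_coeff_le_of_norm_eval_le hdeg hp
    simp only [g, coeff_sub, coeff_C_mul_X_pow, if_true, sub_ne_zero]
    intro h
    rw [h] at hc
    linarith
  have hg : 0 < g.natDegree := hn.trans_le (le_natDegree_of_ne_zero hgn)
  have hg' : g.derivative.eval w = 0 := by
    simp only [g, derivative_sub, derivative_C_mul_X_pow, eval_sub, eval_C_mul, eval_pow, eval_X]
    rw [mul_assoc, div_mul_cancel₀ _ hD, sub_self]
  have hroots : g.rootSet ℂ ⊆ closedBall 0 1 := fun r hr => by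
    rw [mem_closedBall_zero_iff]
    exact norm_le_one_of_isRoot_C_mul_X_pow_sub hdeg hp hc (mem_rootSet.mp hr).2
  have hwroot : w ∈ g.derivative.rootSet ℂ :=
    mem_rootSet.mpr ⟨derivative_ne_zero.mpr hg.ne', hg'⟩
  have := convexHull_min hroots (convex_closedBall 0 1)
    (rootSet_derivative_subset_convexHull_rootSet (natDegree_pos_iff_degree_pos.mp hg) hwroot)
  rw [mem_closedBall_zero_iff] at this
  linarith

lemma norm_eval_derivative_le_of_one_le_norm (hdeg : p.natDegree ≤ n)
    (hp : ∀ z : ℂ, ‖z‖ ≤ 1 → ‖p.eval z‖ ≤ M) {w : ℂ} (hw : 1 ≤ ‖w‖) :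
    ‖p.derivative.eval w‖ ≤ n * M * ‖w‖ ^ (n - 1) := by
  have hclosed : IsClosed {w : ℂ | ‖p.derivative.eval w‖ ≤ n * M * ‖w‖ ^ (n - 1)} :=
    isClosed_le (by fun_prop) (by fun_prop)
  have hsub : (closedBall (0 : ℂ) 1)ᶜ ⊆ {w | ‖p.derivative.eval w‖ ≤ n * M * ‖w‖ ^ (n - 1)} :=
    fun w hw => norm_eval_derivative_le_of_one_lt_norm hdeg hp (by simpa using hw)
  refine closure_minimal hsub hclosed ?_
  rw [closure_compl, interior_closedBall _ one_ne_zero]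
  simpa using hw

end Polynomial

lemma norm_sub_le_mul_abs_of_norm_deriv_le_on_circle {F : Type*} [NormedAddCommGroup F]
    [NormedSpace ℂ F] {f f' : ℂ → F} {B : ℝ} (hf : ∀ z : ℂ, ‖z‖ = 1 → HasDerivAt f (f' z) z)
    (hB : ∀ z : ℂ, ‖z‖ = 1 → ‖f' z‖ ≤ B) {z : ℂ} (hz : ‖z‖ = 1) (θ : ℝ) :
    ‖f (z * exp (θ * I)) - f z‖ ≤ B * |θ| := by
  set γ : ℝ → ℂ := fun t => z * exp (t * I)
  have hγ : ∀ t : ℝ, ‖γ t‖ = 1 := fun t => by simp [γ, hz]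
  have hγ' : ∀ t : ℝ, HasDerivAt γ (γ t * I) t := fun t => by
    have := (((hasDerivAt_id t).ofReal_comp).mul_const I).cexp.const_mul z
    simpa [γ, mul_assoc] using this
  have hfγ : ∀ t : ℝ, HasDerivAt (f ∘ γ) ((γ t * I) • f' (γ t)) t :=
    fun t => (hf _ (hγ t)).scomp t (hγ' t)
  have hbound : ∀ t : ℝ, ‖(γ t * I) • f' (γ t)‖ ≤ B := fun t => by
    simpa [norm_smul, hγ t] using hB _ (hγ t)
  simpa [γ] using convex_univ.norm_image_sub_le_of_norm_hasDerivWithin_le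
    (fun t _ => (hfγ t).hasDerivWithinAt) (fun t _ => hbound t) (Set.mem_univ 0) (Set.mem_univ θ)

theorem polynomial_degree_lower_bound_general (f : ℂ → ℂ) (p : Polynomial ℂ)
    (n : ℕ) (d δ R : ℝ) (hd : 0 < d)
    (hdeg : p.natDegree ≤ n)
    (happrox : ∀ z : ℂ, ‖z‖ ≤ 1 → ‖f z - p.eval z‖ ≤ d / 3)
    (hfR : ∀ z : ℂ, ‖z‖ ≤ 1 → ‖f z‖ ≤ R)
    (z₁ z₂ : ℂ) (hz₁ : ‖z₁‖ = 1) (hz₂ : ‖z₂‖ = 1)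
    (hsep : d ≤ ‖f z₂ - f z₁‖)
    (harg : |Complex.arg (z₂ / z₁)| ≤ δ) :
    (d / 3) / (δ * (R + d / 3)) ≤ (n : ℝ) := by
  have hp : ∀ z : ℂ, ‖z‖ ≤ 1 → ‖p.eval z‖ ≤ R + d / 3 := fun z hz =>
    calc ‖p.eval z‖ = ‖f z - (f z - p.eval z)‖ := by rw [sub_sub_cancel]
      _ ≤ R + d / 3 := (norm_sub_le _ _).trans (add_le_add (hfR z hz) (happrox z hz))
  have hp_sep : d / 3 ≤ ‖p.eval z₂ - p.eval z₁‖ := by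
    have := dist_triangle4 (f z₂) (p.eval z₂) (p.eval z₁) (f z₁)
    rw [dist_comm (p.eval z₁), dist_eq_norm, dist_eq_norm, dist_eq_norm, dist_eq_norm] at this
    linarith [happrox z₂ hz₂.le, happrox z₁ hz₁.le]
  have hz₂_eq : z₂ = z₁ * exp (arg (z₂ / z₁) * I) := by
    have hz₁0 : z₁ ≠ 0 := norm_ne_zero_iff.mp (by simp [hz₁])
    have := norm_mul_exp_arg_mul_I (z₂ / z₁)
    rw [norm_div, hz₁, hz₂, div_one, ofReal_one, one_mul] at this
    rw [this, mul_div_cancel₀ _ hz₁0]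
  have hB : ∀ z : ℂ, ‖z‖ = 1 → ‖p.derivative.eval z‖ ≤ n * (R + d / 3) := fun z hz => by
    simpa [hz] using norm_eval_derivative_le_of_one_le_norm hdeg hp hz.ge
  have harc := norm_sub_le_mul_abs_of_norm_deriv_le_on_circle (fun z _ => p.hasDerivAt z) hB hz₁
    (arg (z₂ / z₁))
  rw [← hz₂_eq] at harc
  have hkey : d / 3 ≤ n * (R + d / 3) * δ :=
    hp_sep.trans (harc.trans (mul_le_mul_of_nonneg_left harg ((norm_nonneg _).trans (hB z₁ hz₁))))
  have hpos : 0 < δ * (R + d / 3) := by nlinarith [n.cast_nonneg (α := ℝ)]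
  rw [div_le_iff₀ hpos]
  linarith

/-- If a polynomial `p` of degree `n` approximates `f` to within `d/3` on the
closed unit disk, `|f| ≤ R` there, and there are points `z₁, z₂` on the unit
circle with `|f(z₂) − f(z₁)| ≥ d` separated by angle (shorter arc) at most `δ`,
then `n ≥ (d/3)/(δ(R + d/3))`. -/
theorem polynomial_degree_lower_bound (f : ℂ → ℂ) (p : Polynomial ℂ)
    (n : ℕ) (d δ R : ℝ) (hd : 0 < d)
    (hcont : ContinuousOn f (Metric.closedBall (0 : ℂ) 1))
    (hdeg : p.natDegree ≤ n)
    (happrox : ∀ z : ℂ, ‖z‖ ≤ 1 → ‖f z - p.eval z‖ ≤ d / 3)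
    (hfR : ∀ z : ℂ, ‖z‖ ≤ 1 → ‖f z‖ ≤ R)
    (z₁ z₂ : ℂ) (hz₁ : ‖z₁‖ = 1) (hz₂ : ‖z₂‖ = 1)
    (hsep : d ≤ ‖f z₂ - f z₁‖)
    (harg : |Complex.arg (z₂ / z₁)| ≤ δ) :
    (d / 3) / (δ * (R + d / 3)) ≤ (n : ℝ) :=
  polynomial_degree_lower_bound_general f p n d δ R hd hdeg happrox hfR z₁ z₂ hz₁ hz₂ hsep harg
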